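/- arXiv:1302.0163 — 2 statements merged into one kernel-verified Lean document; each statement's English description precedes it below -/
import Mathlib

section
/- Let $X_1,\dots,X_n$ be distinct real numbers, let $x\in\mathbb R$, set $a=\#\{i: X_i\le x\}$ and $\hat F(x)=a/n$, and assume $0<a<n$ and $0<F_0(x)<1$ for a specified cdf $F_0$. Define $\mathcal R(x)$ as the ratio of $\sup\{\prod_{i=1}^n p_i : p_i\ge 0, \sum_i p_i=1, \sum_{i:X_i\le x}p_i=F_0(x)\}$ to $\sup\{\prod_{i=1}^n p_i : p_i\ge 0, \sum_i p_i = 1, \sum_{i:X_i\le x}p_i\le F_0(x)\}$. Then $\mathcal R(x)=1$ if $\hat F(x)>F_0(x)$, and $\mathcal R(x)=\big[F_0(x)/\hat F(x)\big]^{n\hat F(x)}\big[(1-F_0(x))/(1-\hat F(x))\big]^{n(1-\hat F(x))}$ if $\hat F(x)\le F_0(x)$. -/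
/-!
By AM-GM on the points `X_i ≤ x` and on the remaining ones separately, a probability vector that
puts mass `t` on `{X_i ≤ x}` has `∏ p_i ≤ (t/a)^a ((1-t)/(n-a))^(n-a)`, with equality for the
vector that is uniform on each of the two blocks. This profile increases on `[0, a/n]` and
decreases on `[a/n, 1]`, so the constraint `∑_{X_i ≤ x} p_i ≤ F0(x)` binds exactly when
`F0(x) < F̂(x)`; otherwise the denominator is the unconstrained maximum, reached at mass `a/n`.
-/

open MeasureTheory Set Finset
open scoped ENNReal

theorem Finset.prod_le_sum_div_card_pow {ι : Type*} (s : Finset ι) (p : ι → ℝ)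
    (hp : ∀ i ∈ s, 0 ≤ p i) : ∏ i ∈ s, p i ≤ ((∑ i ∈ s, p i) / #s) ^ #s := by
  rcases s.eq_empty_or_nonempty with rfl | hs
  · simp
  have hcard : (0 : ℝ) < #s := by exact_mod_cast hs.card_pos
  have amgm := Real.geom_mean_le_arith_mean s (fun _ ↦ 1) p (fun _ _ ↦ zero_le_one)
    (by simpa using hs.card_pos) hp
  simp only [Real.rpow_one, sum_const, nsmul_eq_mul, mul_one, one_mul] at amgm
  calc ∏ i ∈ s, p i = ((∏ i ∈ s, p i) ^ (#s : ℝ)⁻¹) ^ #s := by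
        rw [← Real.rpow_natCast, ← Real.rpow_mul (prod_nonneg hp), inv_mul_cancel₀ hcard.ne',
          Real.rpow_one]
    _ ≤ ((∑ i ∈ s, p i) / #s) ^ #s := by gcongr; exact Real.rpow_nonneg (prod_nonneg hp) _

theorem monotoneOn_pow_mul_one_sub_pow {k m : ℕ} (hk : 0 < k) (hm : 0 < m) :
    MonotoneOn (fun t : ℝ ↦ t ^ k * (1 - t) ^ m) (Icc 0 (k / (k + m))) := by
  obtain ⟨k, rfl⟩ := Nat.exists_eq_add_one_of_ne_zero hk.ne'
  obtain ⟨m, rfl⟩ := Nat.exists_eq_add_one_of_ne_zero hm.ne'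
  refine monotoneOn_of_deriv_nonneg (convex_Icc _ _) (by fun_prop) (by fun_prop) ?_
  rw [interior_Icc]
  rintro t ⟨ht0, htk⟩
  have hsum : (0 : ℝ) < ↑(k + 1) + ↑(m + 1) := by positivity
  rw [lt_div_iff₀ hsum] at htk
  push_cast at htk
  have ht1 : 0 < 1 - t := by nlinarith
  have hderiv : HasDerivAt (fun t : ℝ ↦ t ^ (k + 1) * (1 - t) ^ (m + 1)) _ t :=
    (hasDerivAt_pow (k + 1) t).mul (((hasDerivAt_id t).const_sub 1).pow (m + 1))
  rw [hderiv.deriv]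
  have hfactor : 0 ≤ t ^ k * (1 - t) ^ m * ((k + 1) - (k + m + 2) * t) := by
    have : 0 ≤ ((k : ℝ) + 1) - (k + m + 2) * t := by nlinarith
    positivity
  convert hfactor using 1
  simp only [id, Nat.add_sub_cancel]
  push_cast; ring

/-- The product of the probability vector on `a + b` points that is uniform on the first `a`
points with total mass `t` there, and uniform on the other `b`. -/
noncomputable def maxProdWithMass (a b : ℕ) (t : ℝ) : ℝ :=
  (t / a) ^ a * ((1 - t) / b) ^ b

theorem maxProdWithMass_comm_one_sub (a b : ℕ) (t : ℝ) :
    maxProdWithMass a b (1 - t) = maxProdWithMass b a t := by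
  simp only [maxProdWithMass, sub_sub_cancel, mul_comm]

theorem maxProdWithMass_div_maxProdWithMass (a b : ℕ) (t s : ℝ) :
    maxProdWithMass a b t / maxProdWithMass a b s = (t / s) ^ a * ((1 - t) / (1 - s)) ^ b := by
  simp only [maxProdWithMass, mul_div_mul_comm, ← div_pow]
  rcases eq_or_ne (a : ℝ) 0 with ha | ha <;> rcases eq_or_ne (b : ℝ) 0 with hb | hb
  all_goals simp_all [div_div_div_cancel_right₀]

theorem monotoneOn_maxProdWithMass {a b : ℕ} (ha : 0 < a) (hb : 0 < b) :
    MonotoneOn (maxProdWithMass a b) (Icc 0 (a / (a + b))) := by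
  intro s hs t ht hst
  have key := monotoneOn_pow_mul_one_sub_pow ha hb hs ht hst
  simp only [maxProdWithMass, div_pow, div_mul_div_comm]
  gcongr

theorem antitoneOn_maxProdWithMass {a b : ℕ} (ha : 0 < a) (hb : 0 < b) :
    AntitoneOn (maxProdWithMass a b) (Icc (a / (a + b)) 1) := by
  intro s hs t ht hst
  have hsub : ∀ u ∈ Icc ((a : ℝ) / (a + b)) 1, 1 - u ∈ Icc (0 : ℝ) (b / (b + a)) := by
    rintro u ⟨hu0, hu1⟩
    have : (a : ℝ) / (a + b) = 1 - b / (b + a) := by field_simp; ring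
    constructor <;> linarith
  have key := monotoneOn_maxProdWithMass hb ha (hsub t ht) (hsub s hs) (by linarith)
  rwa [← maxProdWithMass_comm_one_sub a b, ← maxProdWithMass_comm_one_sub a b, sub_sub_cancel,
    sub_sub_cancel] at key

section Simplex

variable {ι : Type*} [Fintype ι] [DecidableEq ι] (A : Finset ι)

theorem prod_le_maxProdWithMass {p : ι → ℝ} (hp : ∀ i, 0 ≤ p i) (hsum : ∑ i, p i = 1) :
    ∏ i, p i ≤ maxProdWithMass #A #Aᶜ (∑ i ∈ A, p i) := by
  have hcompl : ∑ i ∈ Aᶜ, p i = 1 - ∑ i ∈ A, p i := by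
    rw [← hsum, ← sum_add_sum_compl A p, add_sub_cancel_left]
  rw [← prod_mul_prod_compl A p, maxProdWithMass, ← hcompl]
  gcongr
  · exact prod_nonneg fun i _ ↦ hp i
  · exact pow_nonneg (div_nonneg (sum_nonneg fun i _ ↦ hp i) (Nat.cast_nonneg _)) _
  · exact prod_le_sum_div_card_pow A p fun i _ ↦ hp i
  · exact prod_le_sum_div_card_pow Aᶜ p fun i _ ↦ hp i

theorem exists_prod_eq_maxProdWithMass (hA : A.Nonempty) (hAc : Aᶜ.Nonempty) {t : ℝ}
    (ht0 : 0 ≤ t) (ht1 : t ≤ 1) :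
    ∃ p : ι → ℝ, (∀ i, 0 ≤ p i) ∧ ∑ i, p i = 1 ∧ ∑ i ∈ A, p i = t ∧
      ∏ i, p i = maxProdWithMass #A #Aᶜ t := by
  have hA' : (#A : ℝ) ≠ 0 := by exact_mod_cast hA.card_pos.ne'
  have hAc' : (#Aᶜ : ℝ) ≠ 0 := by exact_mod_cast hAc.card_pos.ne'
  set p := A.piecewise (fun _ ↦ t / #A) (fun _ ↦ (1 - t) / #Aᶜ)
  have hpA : ∀ i ∈ A, p i = t / #A := fun i hi ↦ piecewise_eq_of_mem _ _ _ hi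
  have hpAc : ∀ i ∈ Aᶜ, p i = (1 - t) / #Aᶜ :=
    fun i hi ↦ piecewise_eq_of_notMem _ _ _ (mem_compl.1 hi)
  have hsumA : ∑ i ∈ A, p i = t := by
    rw [sum_congr rfl hpA, sum_const, nsmul_eq_mul]; field_simp
  refine ⟨p, fun i ↦ ?_, ?_, hsumA, ?_⟩
  · by_cases hi : i ∈ A
    · rw [hpA i hi]; positivity
    · rw [hpAc i (mem_compl.2 hi)]; exact div_nonneg (by linarith) (by positivity)
  · rw [← sum_add_sum_compl A, hsumA, sum_congr rfl hpAc, sum_const, nsmul_eq_mul]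
    field_simp; ring
  · rw [← prod_mul_prod_compl A, prod_congr rfl hpA, prod_congr rfl hpAc, prod_const, prod_const]
    rfl

theorem isGreatest_prod_of_sum_eq (hA : A.Nonempty) (hAc : Aᶜ.Nonempty) {t : ℝ} (ht0 : 0 ≤ t)
    (ht1 : t ≤ 1) :
    IsGreatest {v : ℝ | ∃ p : ι → ℝ, (∀ i, 0 ≤ p i) ∧ (∑ i, p i) = 1 ∧
      (∑ i ∈ A, p i) = t ∧ v = ∏ i, p i} (maxProdWithMass #A #Aᶜ t) := by
  refine ⟨?_, ?_⟩
  · obtain ⟨p, hp, hsum, hmass, hprod⟩ := exists_prod_eq_maxProdWithMass A hA hAc ht0 ht1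
    exact ⟨p, hp, hsum, hmass, hprod.symm⟩
  · rintro _ ⟨p, hp, hsum, rfl, rfl⟩
    exact prod_le_maxProdWithMass A hp hsum

theorem isGreatest_prod_of_sum_le (hA : A.Nonempty) (hAc : Aᶜ.Nonempty) {t : ℝ} (ht0 : 0 ≤ t) :
    IsGreatest {v : ℝ | ∃ p : ι → ℝ, (∀ i, 0 ≤ p i) ∧ (∑ i, p i) = 1 ∧
      (∑ i ∈ A, p i) ≤ t ∧ v = ∏ i, p i}
      (maxProdWithMass #A #Aᶜ (min t (#A / Fintype.card ι))) := by
  have hfrac : (#A : ℝ) / Fintype.card ι = #A / (#A + #Aᶜ) := by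
    rw [← Nat.cast_add, card_add_card_compl]
  have hfrac0 : (0 : ℝ) ≤ #A / Fintype.card ι := by positivity
  have hfrac1 : (#A : ℝ) / Fintype.card ι ≤ 1 :=
    div_le_one_of_le₀ (by exact_mod_cast card_le_univ A) (Nat.cast_nonneg _)
  have hmono := monotoneOn_maxProdWithMass hA.card_pos hAc.card_pos
  have hanti := antitoneOn_maxProdWithMass hA.card_pos hAc.card_pos
  rw [← hfrac] at hmono hanti
  refine ⟨?_, ?_⟩
  · obtain ⟨p, hp, hsum, hmass, hprod⟩ := exists_prod_eq_maxProdWithMass A hA hAc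
      (le_min ht0 hfrac0) ((min_le_right _ _).trans hfrac1)
    exact ⟨p, hp, hsum, hmass ▸ min_le_left _ _, hprod.symm⟩
  · rintro _ ⟨p, hp, hsum, hle, rfl⟩
    have hs0 : 0 ≤ ∑ i ∈ A, p i := sum_nonneg fun i _ ↦ hp i
    have hs1 : ∑ i ∈ A, p i ≤ 1 := hsum ▸ sum_le_univ_sum_of_nonneg hp
    refine (prod_le_maxProdWithMass A hp hsum).trans ?_
    rcases le_total (∑ i ∈ A, p i) (#A / Fintype.card ι) with h | h
    · exact hmono ⟨hs0, h⟩ ⟨le_min ht0 hfrac0, min_le_right _ _⟩ (le_min hle h)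
    · rw [min_eq_right (h.trans hle)]
      exact hanti ⟨le_rfl, hfrac1⟩ ⟨h, hs1⟩ h

end Simplex

theorem el_ratio_explicit_form_general
    (n : ℕ) (X : Fin n → ℝ) (x : ℝ)
    (F0 : ℝ → ℝ)
    (a : ℕ) (ha : a = (Finset.univ.filter fun i => X i ≤ x).card)
    (ha0 : 0 < a) (han : a < n)
    (hx0 : 0 < F0 x) (hx1 : F0 x < 1)
    (Fhat : ℝ) (hFhat : Fhat = (a : ℝ) / n)
    (num den R : ℝ)
    (hnum : num = sSup {v : ℝ | ∃ p : Fin n → ℝ, (∀ i, 0 ≤ p i) ∧ (∑ i, p i) = 1 ∧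
      (∑ i ∈ Finset.univ.filter fun i => X i ≤ x, p i) = F0 x ∧ v = ∏ i, p i})
    (hden : den = sSup {v : ℝ | ∃ p : Fin n → ℝ, (∀ i, 0 ≤ p i) ∧ (∑ i, p i) = 1 ∧
      (∑ i ∈ Finset.univ.filter fun i => X i ≤ x, p i) ≤ F0 x ∧ v = ∏ i, p i})
    (hR : R = num / den) :
    (Fhat > F0 x → R = 1) ∧
    (Fhat ≤ F0 x →
      R = (F0 x / Fhat) ^ ((n : ℝ) * Fhat) *
        ((1 - F0 x) / (1 - Fhat)) ^ ((n : ℝ) * (1 - Fhat))) := by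
  set A := Finset.univ.filter fun i => X i ≤ x
  have hA : #A = a := ha.symm
  have hAc : #Aᶜ = n - a := by rw [card_compl, hA, Fintype.card_fin]
  have hAne : A.Nonempty := card_pos.1 (hA ▸ ha0)
  have hAcne : Aᶜ.Nonempty := card_pos.1 (by omega)
  have hnum' := hnum ▸ (isGreatest_prod_of_sum_eq A hAne hAcne hx0.le hx1.le).csSup_eq
  have hden' := hden ▸ (isGreatest_prod_of_sum_le A hAne hAcne hx0.le).csSup_eq
  rw [hA, hAc] at hnum'
  rw [hA, hAc, Fintype.card_fin, ← hFhat] at hden'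
  rw [hR, hnum', hden', maxProdWithMass_div_maxProdWithMass]
  refine ⟨fun h ↦ ?_, fun h ↦ ?_⟩
  · rw [min_eq_left h.le, div_self hx0.ne', div_self (sub_ne_zero.2 hx1.ne'), one_pow, one_pow,
      mul_one]
  · have hn : (n : ℝ) ≠ 0 := by exact_mod_cast (ha0.trans han).ne'
    have hna : (n : ℝ) * Fhat = a := by rw [hFhat]; field_simp
    have hnb : (n : ℝ) * (1 - Fhat) = (n - a : ℕ) := by
      rw [Nat.cast_sub han.le, hFhat]; field_simp
    rw [min_eq_right h, hna, hnb, Real.rpow_natCast, Real.rpow_natCast]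

/-- **Explicit form of the local empirical likelihood ratio.** Let `X_1, …, X_n` be distinct
reals, `x ∈ ℝ`, `a = #{i : X_i ≤ x}` with `0 < a < n`, and let `F0` be the cdf of a
probability measure `μ` with `0 < F0(x) < 1`. With `𝓡(x)` the ratio of
`sup{∏ p_i : p ≥ 0, ∑ p_i = 1, ∑_{X_i ≤ x} p_i = F0(x)}` to
`sup{∏ p_i : p ≥ 0, ∑ p_i = 1, ∑_{X_i ≤ x} p_i ≤ F0(x)}`, one has `𝓡(x) = 1` if
`F̂(x) > F0(x)` and `𝓡(x) = (F0(x)/F̂(x))^(n F̂(x)) ((1-F0(x))/(1-F̂(x)))^(n(1-F̂(x)))`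
if `F̂(x) ≤ F0(x)`, where `F̂(x) = a/n` (real powers via `Real.rpow`). -/
theorem el_ratio_explicit_form
    (n : ℕ) (X : Fin n → ℝ) (hX : Function.Injective X) (x : ℝ)
    (μ : Measure ℝ) [IsProbabilityMeasure μ]
    (F0 : ℝ → ℝ) (hF0 : ∀ y, F0 y = (μ (Iic y)).toReal)
    (a : ℕ) (ha : a = (Finset.univ.filter fun i => X i ≤ x).card)
    (ha0 : 0 < a) (han : a < n)
    (hx0 : 0 < F0 x) (hx1 : F0 x < 1)
    (Fhat : ℝ) (hFhat : Fhat = (a : ℝ) / n)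
    (num den R : ℝ)
    (hnum : num = sSup {v : ℝ | ∃ p : Fin n → ℝ, (∀ i, 0 ≤ p i) ∧ (∑ i, p i) = 1 ∧
      (∑ i ∈ Finset.univ.filter fun i => X i ≤ x, p i) = F0 x ∧ v = ∏ i, p i})
    (hden : den = sSup {v : ℝ | ∃ p : Fin n → ℝ, (∀ i, 0 ≤ p i) ∧ (∑ i, p i) = 1 ∧
      (∑ i ∈ Finset.univ.filter fun i => X i ≤ x, p i) ≤ F0 x ∧ v = ∏ i, p i})
    (hR : R = num / den) :
    (Fhat > F0 x → R = 1) ∧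
    (Fhat ≤ F0 x →
      R = (F0 x / Fhat) ^ ((n : ℝ) * Fhat) *
        ((1 - F0 x) / (1 - Fhat)) ^ ((n : ℝ) * (1 - Fhat))) :=
  el_ratio_explicit_form_general n X x F0 a ha ha0 han hx0 hx1 Fhat hFhat num den R hnum hden hR
end

section
/- Let $k\ge 2$, let $n_1,\dots,n_k$ be positive integers, and let $a_1,\dots,a_k$ be integers with $0<a_j<n_j$ for all $j$; set $\hat p_j = a_j/n_j$. Let $\mathcal I=\{z\in\mathbb R^k: z_1\le z_2\le\cdots\le z_k\}$ and let $z^*$ be the unique minimizer over $z\in\mathcal I$ of $\sum_{j=1}^k n_j(\hat p_j - z_j)^2$. Then $z^*\in(0,1)^k$, and $z^*$ maximizes the ordered binomial log-likelihood $\ell(z)=\sum_{j=1}^k\big[a_j\log z_j + (n_j-a_j)\log(1-z_j)\big]$ over $\{z\in(0,1)^k: z_1\le\cdots\le z_k\}$. -/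
/-!
The isotonic regression `z*` of `p̂` satisfies the variational inequality
`∑ⱼ nⱼ (p̂ⱼ - z*ⱼ) uⱼ ≤ 0` for every direction `u` that is nondecreasing on the level sets
of `z*`, since `z* + t u` stays isotonic for small `t > 0`. Lifting `z*` on the set where it is
`≤ 0` (or lowering it where it is `≥ 1`) is such a direction, which forces `z* ∈ (0,1)^k`.
The log-likelihood is a sum of concave functions with
`ℓⱼ'(s) = nⱼ (p̂ⱼ - s) / (s (1 - s))`, so `ℓ(z) - ℓ(z*) ≤ ∑ⱼ nⱼ (p̂ⱼ - z*ⱼ) dⱼ` with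
`dⱼ = (zⱼ - z*ⱼ) / (z*ⱼ (1 - z*ⱼ))`; for isotonic `z` this `d` is an admissible direction.
-/

open Set Filter Topology Finset

section IsotonicRegression

variable {ι : Type*} [Fintype ι]

theorem sum_mul_sub_mul_nonpos_of_eventually_le (w p x u : ι → ℝ)
    (h : ∀ᶠ t in 𝓝[>] (0 : ℝ),
      ∑ j, w j * (p j - x j) ^ 2 ≤ ∑ j, w j * (p j - (x j + t * u j)) ^ 2) :
    ∑ j, w j * (p j - x j) * u j ≤ 0 := by
  set S := ∑ j, w j * (p j - x j) * u j
  set Q := ∑ j, w j * u j ^ 2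
  have expand : ∀ t : ℝ, ∑ j, w j * (p j - (x j + t * u j)) ^ 2 =
      ∑ j, w j * (p j - x j) ^ 2 + -2 * t * S + t ^ 2 * Q := by
    intro t
    simp only [S, Q, Finset.mul_sum, ← Finset.sum_add_distrib]
    exact Finset.sum_congr rfl fun j _ => by ring
  have hle : ∀ᶠ t in 𝓝[>] (0 : ℝ), 2 * S ≤ t * Q := by
    filter_upwards [h, self_mem_nhdsWithin] with t ht (htpos : 0 < t)
    rw [expand] at ht
    nlinarith
  have hlim : Tendsto (fun t : ℝ => t * Q) (𝓝[>] 0) (𝓝 0) :=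
    ((continuous_mul_const Q).tendsto' 0 0 (zero_mul Q)).mono_left nhdsWithin_le_nhds
  linarith [ge_of_tendsto hlim hle]

variable [Preorder ι]

def IsIsotonicRegression (w p x : ι → ℝ) : Prop :=
  Monotone x ∧ ∀ y : ι → ℝ, Monotone y →
    ∑ j, w j * (p j - x j) ^ 2 ≤ ∑ j, w j * (p j - y j) ^ 2

theorem Monotone.eventually_monotone_add_mul {x u : ι → ℝ} (hx : Monotone x)
    (hu : ∀ i j, i ≤ j → x i = x j → u i ≤ u j) :
    ∀ᶠ t in 𝓝[>] (0 : ℝ), Monotone fun j => x j + t * u j := by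
  suffices ∀ᶠ t in 𝓝[>] (0 : ℝ), ∀ i j, i ≤ j → x i + t * u i ≤ x j + t * u j from
    this.mono fun t ht i j => ht i j
  refine eventually_all.2 fun i => eventually_all.2 fun j => ?_
  by_cases hij : i ≤ j
  · rcases (hx hij).eq_or_lt with heq | hlt
    · filter_upwards [self_mem_nhdsWithin] with t (ht : 0 < t) _
      nlinarith [hu i j hij heq]
    · have hcont : ∀ k, Continuous fun t : ℝ => x k + t * u k := fun k => by fun_prop
      filter_upwards [nhdsWithin_le_nhds <|
        (hcont i).continuousAt.eventually_lt (hcont j).continuousAt (by simpa using hlt)]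
        with t ht _
      exact ht.le
  · exact Eventually.of_forall fun _ h => absurd h hij

namespace IsIsotonicRegression

variable {w p x : ι → ℝ}

theorem sum_mul_nonpos (hx : IsIsotonicRegression w p x) {u : ι → ℝ}
    (hu : ∀ i j, i ≤ j → x i = x j → u i ≤ u j) :
    ∑ j, w j * (p j - x j) * u j ≤ 0 :=
  sum_mul_sub_mul_nonpos_of_eventually_le w p x u <|
    (hx.1.eventually_monotone_add_mul hu).mono fun _ ht => hx.2 _ ht

theorem lt_apply (hx : IsIsotonicRegression w p x) (hw : ∀ j, 0 < w j) {c : ℝ}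
    (hp : ∀ j, c < p j) (j₀ : ι) : c < x j₀ := by
  by_contra! hj₀
  have hpos : 0 < ∑ j, w j * (p j - x j) * if x j ≤ c then 1 else 0 := by
    refine Finset.sum_pos' (fun j _ => ?_) ⟨j₀, mem_univ _, ?_⟩
    · split_ifs with hj
      · nlinarith [hw j, hp j]
      · simp
    · simp only [hj₀, if_true, mul_one]
      nlinarith [hw j₀, hp j₀]
  refine hpos.not_ge (hx.sum_mul_nonpos fun i j _ hij => ?_)
  simp [hij]

theorem apply_lt (hx : IsIsotonicRegression w p x) (hw : ∀ j, 0 < w j) {c : ℝ}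
    (hp : ∀ j, p j < c) (j₀ : ι) : x j₀ < c := by
  by_contra! hj₀
  have hpos : 0 < ∑ j, w j * (p j - x j) * if c ≤ x j then -1 else 0 := by
    refine Finset.sum_pos' (fun j _ => ?_) ⟨j₀, mem_univ _, ?_⟩
    · split_ifs with hj
      · nlinarith [hw j, hp j]
      · simp
    · simp only [hj₀, if_true]
      nlinarith [hw j₀, hp j₀]
  refine hpos.not_ge (hx.sum_mul_nonpos fun i j _ hij => ?_)
  simp [hij]

end IsIsotonicRegression

end IsotonicRegression

theorem binomial_loglik_le_tangent {A N z s : ℝ} (hA : 0 ≤ A) (hAN : A ≤ N)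
    (hz : z ∈ Ioo (0 : ℝ) 1) (hs : s ∈ Ioo (0 : ℝ) 1) :
    A * Real.log z + (N - A) * Real.log (1 - z) ≤
      A * Real.log s + (N - A) * Real.log (1 - s) + (A - N * s) * ((z - s) / (s * (1 - s))) := by
  obtain ⟨hz0, hz1⟩ := hz
  obtain ⟨hs0, hs1⟩ := hs
  have hlog : Real.log z - Real.log s ≤ z / s - 1 := by
    rw [← Real.log_div hz0.ne' hs0.ne']
    exact Real.log_le_sub_one_of_pos (div_pos hz0 hs0)
  have hlog' : Real.log (1 - z) - Real.log (1 - s) ≤ (1 - z) / (1 - s) - 1 := by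
    rw [← Real.log_div (by linarith) (by linarith)]
    exact Real.log_le_sub_one_of_pos (div_pos (by linarith) (by linarith))
  have tangent : A * (z / s - 1) + (N - A) * ((1 - z) / (1 - s) - 1) =
      (A - N * s) * ((z - s) / (s * (1 - s))) := by
    field_simp [hs0.ne', (sub_pos.2 hs1).ne']
    ring
  nlinarith [mul_le_mul_of_nonneg_left hlog hA, mul_le_mul_of_nonneg_left hlog' (sub_nonneg.2 hAN)]

theorem bioassay_isotonic_mle_general
    (k : ℕ) (nn a : Fin k → ℕ)
    (ha0 : ∀ j, 0 < a j) (han : ∀ j, a j < nn j)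
    (zstar : Fin k → ℝ) (hzmono : Monotone zstar)
    (hzmin : ∀ z : Fin k → ℝ, Monotone z →
      ∑ j, (nn j : ℝ) * ((a j : ℝ) / (nn j : ℝ) - zstar j) ^ 2 ≤
        ∑ j, (nn j : ℝ) * ((a j : ℝ) / (nn j : ℝ) - z j) ^ 2) :
    (∀ j, zstar j ∈ Ioo (0 : ℝ) 1) ∧
    ∀ z : Fin k → ℝ, (∀ j, z j ∈ Ioo (0 : ℝ) 1) → Monotone z →
      ∑ j, ((a j : ℝ) * Real.log (z j) + ((nn j : ℝ) - (a j : ℝ)) * Real.log (1 - z j)) ≤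
        ∑ j, ((a j : ℝ) * Real.log (zstar j) +
          ((nn j : ℝ) - (a j : ℝ)) * Real.log (1 - zstar j)) := by
  have hreg : IsIsotonicRegression (fun j => (nn j : ℝ)) (fun j => (a j : ℝ) / nn j) zstar :=
    ⟨hzmono, hzmin⟩
  have ha0R (j : Fin k) : (0 : ℝ) < a j := by exact_mod_cast ha0 j
  have hanR (j : Fin k) : (a j : ℝ) < nn j := by exact_mod_cast han j
  have hn (j : Fin k) : (0 : ℝ) < nn j := (ha0R j).trans (hanR j)
  have hzstar (j : Fin k) : zstar j ∈ Ioo (0 : ℝ) 1 :=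
    ⟨hreg.lt_apply hn (fun j => div_pos (ha0R j) (hn j)) j,
      hreg.apply_lt hn (fun j => (div_lt_one (hn j)).2 (hanR j)) j⟩
  refine ⟨hzstar, fun z hz hzm => ?_⟩
  have hden (j : Fin k) : 0 < zstar j * (1 - zstar j) :=
    mul_pos (hzstar j).1 (sub_pos.2 (hzstar j).2)
  have hvar := hreg.sum_mul_nonpos (u := fun j => (z j - zstar j) / (zstar j * (1 - zstar j)))
    fun i j hij heq => by
      simp only [heq]
      exact div_le_div_of_nonneg_right (by linarith [hzm hij]) (hden j).le
  have hslope (j : Fin k) : (nn j : ℝ) * ((a j : ℝ) / nn j - zstar j) = a j - nn j * zstar j := by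
    field_simp [(hn j).ne']
  simp only [hslope] at hvar
  calc _ ≤ ∑ j, (((a j : ℝ) * Real.log (zstar j) + ((nn j : ℝ) - a j) * Real.log (1 - zstar j)) +
          (a j - nn j * zstar j) * ((z j - zstar j) / (zstar j * (1 - zstar j)))) :=
        sum_le_sum fun j _ => binomial_loglik_le_tangent (ha0R j).le (hanR j).le (hz j) (hzstar j)
    _ ≤ _ := by rw [sum_add_distrib]; linarith

/-- **The bioassay problem.** Let `0 < a_j < n_j` for `j = 1, …, k`, and set
`p̂_j = a_j / n_j`. If `z*` is the (unique) minimizer over the isotonic cone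
`𝓘 = {z : z_1 ≤ ⋯ ≤ z_k}` of the weighted sum of squares `∑_j n_j (p̂_j - z_j)²`,
then `z* ∈ (0,1)^k` and `z*` maximizes the ordered binomial log-likelihood
`ℓ(z) = ∑_j [a_j log z_j + (n_j - a_j) log(1 - z_j)]` over `{z ∈ (0,1)^k : z_1 ≤ ⋯ ≤ z_k}`. -/
theorem bioassay_isotonic_mle
    (k : ℕ) (hk : 2 ≤ k) (nn a : Fin k → ℕ)
    (ha0 : ∀ j, 0 < a j) (han : ∀ j, a j < nn j)
    (zstar : Fin k → ℝ) (hzmono : Monotone zstar)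
    (hzmin : ∀ z : Fin k → ℝ, Monotone z →
      ∑ j, (nn j : ℝ) * ((a j : ℝ) / (nn j : ℝ) - zstar j) ^ 2 ≤
        ∑ j, (nn j : ℝ) * ((a j : ℝ) / (nn j : ℝ) - z j) ^ 2) :
    (∀ j, zstar j ∈ Ioo (0 : ℝ) 1) ∧
    ∀ z : Fin k → ℝ, (∀ j, z j ∈ Ioo (0 : ℝ) 1) → Monotone z →
      ∑ j, ((a j : ℝ) * Real.log (z j) + ((nn j : ℝ) - (a j : ℝ)) * Real.log (1 - z j)) ≤
        ∑ j, ((a j : ℝ) * Real.log (zstar j) +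
          ((nn j : ℝ) - (a j : ℝ)) * Real.log (1 - zstar j)) :=
  bioassay_isotonic_mle_general k nn a ha0 han zstar hzmono hzmin
end
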